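/- Let q be a prime power, v ≥ 3, 1 ≤ t < q, and let K be an (n,s)-arc in PG(v−1,q) that is t-quasi-divisible with divisor q. Then for every (v−2)-dimensional subspace S of PG(v−1,q), the sum over the q+1 hyperplanes H containing S of the residue of n + t − K(H) modulo q (taken in {0,…,q−1}) is congruent to t modulo q. -/

import Mathlib

open Module

/-- The set of subspaces of the vector space `F^v` of (algebraic) dimension `k`;
for `k = 1` these are the points of `PG(v-1, q)`, for `k = 2` the lines, and
for `k = v - 1` the hyperplanes. -/
abbrev PSub (F : Type*) [Field F] (v k : ℕ) :=
  {S : Submodule F (Fin v → F) // Module.finrank F S = k}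

/-- The multiplicity `K(S)` of a subspace `S` with respect to the arc `K`. -/
noncomputable def pmult {F : Type*} [Field F] {v : ℕ}
    (K : PSub F v 1 → ℕ) (S : Submodule F (Fin v → F)) : ℕ :=
  ∑ᶠ (P : PSub F v 1) (_ : P.1 ≤ S), K P

/-- The cardinality `#K` of the arc `K`. -/
noncomputable def pcard {F : Type*} [Field F] {v : ℕ} (K : PSub F v 1 → ℕ) : ℕ :=
  ∑ᶠ P : PSub F v 1, K P

/-- The residue of `n + t - K(H)` modulo `q`, taken in `{0, ..., q-1}`. -/
noncomputable def dualMult {F : Type*} [Field F] {v : ℕ} (q n t : ℕ)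
    (K : PSub F v 1 → ℕ) (H : PSub F v (v - 1)) : ℕ :=
  ((((n : ℤ) + (t : ℤ) - (pmult K H.1 : ℤ)) % (q : ℤ)).toNat)

/-!
Modulo `q` the residue of `n + t - K(H)` is just `n + t - K(H)`, so the sum is
`(q + 1)(n + t) - ∑_{H ⊇ S} K(H)`, there being `q + 1` hyperplanes through `S` (the points of
the projective line `V ⧸ S`). A point of `S` lies on all of them and a point `P` outside `S` on
exactly one, `S ⊔ P`; double counting gives `∑_{H ⊇ S} K(H) = q K(S) + n`, so the sum is
`≡ n + t - n = t`.
-/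

namespace Submodule

variable {R M : Type*} [Semiring R] [AddCommMonoid M] [Module R M]

noncomputable instance fintypeOfFinite [Finite M] : Fintype (Submodule R M) :=
  haveI : Finite (Submodule R M) := Finite.of_injective _ SetLike.coe_injective
  Fintype.ofFinite _

end Submodule

section ProjectiveGeometry

variable {F V : Type*} [Field F] [AddCommGroup V] [Module F V] [FiniteDimensional F V]

theorem Submodule.finrank_comap_mkQ (S : Submodule F V) (W : Submodule F (V ⧸ S)) :
    finrank F (W.comap S.mkQ) = finrank F W + finrank F S := by
  have h := LinearMap.finrank_range_add_finrank_ker (S.mkQ ∘ₗ (W.comap S.mkQ).subtype)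
  rw [LinearMap.range_comp, Submodule.range_subtype,
    Submodule.map_comap_eq_of_surjective S.mkQ_surjective, LinearMap.ker_comp,
    Submodule.ker_mkQ, (Submodule.comapSubtypeEquivOfLe (S.le_comap_mkQ W)).finrank_eq] at h
  exact h.symm

noncomputable def Submodule.quotientFinrankEquiv (S : Submodule F V) {k m : ℕ}
    (hm : finrank F S + k = m) :
    {W : Submodule F (V ⧸ S) // finrank F W = k} ≃
      {H : Submodule F V // finrank F H = m ∧ S ≤ H} where
  toFun W := ⟨W.1.comap S.mkQ, by rw [S.finrank_comap_mkQ, W.2]; omega, S.le_comap_mkQ W⟩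
  invFun H := ⟨H.1.map S.mkQ, by
    have h := S.finrank_comap_mkQ (H.1.map S.mkQ)
    rw [Submodule.comap_map_mkQ, sup_eq_right.mpr H.2.2, H.2.1] at h
    omega⟩
  left_inv W := Subtype.ext (Submodule.map_comap_eq_of_surjective S.mkQ_surjective _)
  right_inv H := Subtype.ext <| (Submodule.comap_map_mkQ S H.1).trans (sup_eq_right.mpr H.2.2)

theorem natCard_hyperplanes_ge [Finite F] {S : Submodule F V} {m : ℕ}
    (hS : finrank F S + 2 = finrank F V) (hm : finrank F S + 1 = m) :
    Nat.card {H : {H : Submodule F V // finrank F H = m} // S ≤ H.1} = Nat.card F + 1 := by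
  have hQ : finrank F (V ⧸ S) = 2 := by
    have h := S.finrank_quotient_add_finrank
    omega
  rw [Nat.card_congr ((Equiv.subtypeSubtypeEquivSubtypeInter _ _).trans
    ((S.quotientFinrankEquiv hm).symm.trans (Projectivization.equivSubmodule F (V ⧸ S)).symm)),
    Projectivization.card_of_finrank_two F (V ⧸ S) hQ]

theorem Submodule.finrank_sup_of_not_le {S P : Submodule F V} (hP : finrank F P = 1)
    (hPS : ¬ P ≤ S) :
    finrank F ↥(S ⊔ P) = finrank F S + 1 := by
  have hdisj : Disjoint P S :=
    (Submodule.isAtom_iff_finrank_eq_one.mpr hP).not_le_iff_disjoint.mp hPS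
  have h := Submodule.finrank_sup_add_finrank_inf_eq S P
  rw [hdisj.symm.eq_bot, finrank_bot, hP] at h
  omega

end ProjectiveGeometry

section DoubleCounting

open Finset

variable {F V : Type*} [Field F] [Finite F] [AddCommGroup V] [Module F V] [Finite V]
  {S : Submodule F V} {m : ℕ}

open scoped Classical in
theorem card_hyperplanes_ge (hS : finrank F S + 2 = finrank F V) (hm : finrank F S + 1 = m) :
    #{H : {H : Submodule F V // finrank F H = m} | S ≤ H.1} = Nat.card F + 1 := by
  rw [← natCard_hyperplanes_ge hS hm, Nat.card_eq_fintype_card, Fintype.card_subtype]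

open scoped Classical in
theorem card_hyperplanes_ge_and_point_le (hS : finrank F S + 2 = finrank F V)
    (hm : finrank F S + 1 = m) (P : {P : Submodule F V // finrank F P = 1}) :
    #{H : {H : Submodule F V // finrank F H = m} | S ≤ H.1 ∧ P.1 ≤ H.1} =
      if P.1 ≤ S then Nat.card F + 1 else 1 := by
  split_ifs with hPS
  · rw [← card_hyperplanes_ge hS hm]
    congr 1
    ext H
    simpa using fun h => hPS.trans h
  · rw [card_eq_one]
    refine ⟨⟨S ⊔ P.1, (S.finrank_sup_of_not_le P.2 hPS).trans hm⟩, ?_⟩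
    ext H
    simp only [mem_filter, mem_univ, true_and, mem_singleton]
    constructor
    · rintro ⟨hSH, hPH⟩
      refine Subtype.ext (Submodule.eq_of_le_of_finrank_le (sup_le hSH hPH) ?_).symm
      rw [S.finrank_sup_of_not_le P.2 hPS, H.2, hm]
    · rintro rfl
      exact ⟨le_sup_left, le_sup_right⟩

open scoped Classical in
theorem sum_hyperplanes_ge_sum_points_le {M : Type*} [AddCommMonoid M]
    (hS : finrank F S + 2 = finrank F V) (hm : finrank F S + 1 = m)
    (K : {P : Submodule F V // finrank F P = 1} → M) :
    ∑ H : {H : Submodule F V // finrank F H = m} with S ≤ H.1, ∑ P with P.1 ≤ H.1, K P =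
      Nat.card F • ∑ P with P.1 ≤ S, K P + ∑ P, K P := by
  rw [sum_comm' (t' := univ) (s' := fun P => {H | S ≤ H.1 ∧ P.1 ≤ H.1}) (by simp)]
  simp_rw [sum_const, card_hyperplanes_ge_and_point_le hS hm]
  rw [smul_sum, sum_filter, ← sum_add_distrib]
  refine sum_congr rfl fun P _ => ?_
  split_ifs <;> simp [add_smul]

end DoubleCounting

section Arcs

open Finset

variable {F : Type*} [Field F] {v : ℕ} (K : PSub F v 1 → ℕ)

open scoped Classical in
theorem pmult_eq_sum [Fintype F] (T : Submodule F (Fin v → F)) :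
    pmult K T = ∑ P with P.1 ≤ T, K P :=
  finsum_cond_eq_sum_of_cond_iff _ (by simp)

theorem pcard_eq_sum [Fintype F] : pcard K = ∑ P, K P :=
  finsum_eq_sum_of_fintype _

theorem natCast_dualMult {q : ℕ} (hq : q ≠ 0) (n t : ℕ) (H : PSub F v (v - 1)) :
    (dualMult q n t K H : ZMod q) = n + t - pmult K H.1 := by
  have hnonneg : 0 ≤ ((n : ℤ) + t - pmult K H.1) % q := Int.emod_nonneg _ (by exact_mod_cast hq)
  rw [dualMult, ← Int.cast_natCast, Int.toNat_of_nonneg hnonneg, ZMod.intCast_mod]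
  push_cast
  ring

end Arcs

theorem stmt12_general {F : Type*} [Field F] [Fintype F] (q : ℕ) (hq : Fintype.card F = q)
    {v : ℕ} (hv : 3 ≤ v) (n t : ℕ)
    (K : PSub F v 1 → ℕ) (hn : pcard K = n) :
    ∀ S : PSub F v (v - 2),
      (∑ᶠ (H : PSub F v (v - 1)) (_ : S.1 ≤ H.1), dualMult q n t K H) ≡ t [MOD q] := by
  classical
  intro S
  have hq0 : q ≠ 0 := hq ▸ Fintype.card_ne_zero
  have hS : finrank F S.1 + 2 = finrank F (Fin v → F) := by rw [S.2, finrank_fin_fun]; omega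
  have hm : finrank F S.1 + 1 = v - 1 := by rw [S.2]; omega
  have hdouble := sum_hyperplanes_ge_sum_points_le hS hm (fun P => (K P : ZMod q))
  rw [← ZMod.natCast_eq_natCast_iff,
    finsum_cond_eq_sum_of_cond_iff (t := {H | S.1 ≤ H.1}) _ (by simp), Nat.cast_sum]
  simp_rw [natCast_dualMult K hq0, pmult_eq_sum, Nat.cast_sum]
  rw [Finset.sum_sub_distrib, Finset.sum_const, card_hyperplanes_ge hS hm, hdouble, ← hn,
    pcard_eq_sum, Nat.cast_sum]
  simp [nsmul_eq_mul, hq]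

/-- For a `t`-quasi-divisible `(n,s)`-arc `K` in `PG(v-1,q)`, the dual arc
`K̃` is a `(t mod q)`-arc: for every `(v-2)`-dimensional subspace `S`, the sum
over the hyperplanes `H ⊇ S` of the residue of `n + t - K(H)` modulo `q` is
congruent to `t` modulo `q`. -/
theorem stmt12 {F : Type*} [Field F] [Fintype F] (q : ℕ) (hq : Fintype.card F = q)
    {v : ℕ} (hv : 3 ≤ v) (n s t : ℕ) (ht1 : 1 ≤ t) (ht2 : t < q)
    (K : PSub F v 1 → ℕ) (hn : pcard K = n)
    (hs : ∀ H : PSub F v (v - 1), pmult K H.1 ≤ s)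
    (hs' : ∃ H : PSub F v (v - 1), pmult K H.1 = s)
    (hst : s ≡ n + t [MOD q])
    (hqd : ∀ H : PSub F v (v - 1), ∃ j : ℕ, j ≤ t ∧ pmult K H.1 ≡ n + j [MOD q]) :
    ∀ S : PSub F v (v - 2),
      (∑ᶠ (H : PSub F v (v - 1)) (_ : S.1 ≤ H.1), dualMult q n t K H) ≡ t [MOD q] :=
  stmt12_general q hq hv n t K hn
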